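/- arXiv:2104.13370 — 6 statements merged into one kernel-verified Lean document; each statement's English description precedes it below -/
import Mathlib

section
/- For all p ∈ [0,1] and y ≥ 0, one has the inequality p·y + log(1 − p + p·e^{−y}) ≤ (y²·p)/2. -/
theorem stmt_4 (p y : ℝ) (hp0 : 0 ≤ p) (hp1 : p ≤ 1) (hy : 0 ≤ y) :
    p * y + Real.log (1 - p + p * Real.exp (-y)) ≤ y ^ 2 * p / 2 := by
  have hexp : 0 < Real.exp (-y) := Real.exp_pos _
  have hle1 : Real.exp (-y) ≤ 1 := Real.exp_le_one_iff.mpr (by linarith)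
  have hpos : 0 < 1 - p + p * Real.exp (-y) := by nlinarith
  have hlog := Real.log_le_sub_one_of_pos hpos
  have hq : 1 + y + y ^ 2 / 2 ≤ Real.exp y := Real.quadratic_le_exp_of_nonneg hy
  have hmul : Real.exp (-y) * Real.exp y = 1 := by
    rw [← Real.exp_add]; simp
  have hquad : Real.exp (-y) ≤ 1 - y + y ^ 2 / 2 := by
    nlinarith [Real.exp_pos y, sq_nonneg (y ^ 2)]
  nlinarith
end

section
/- Let ζ > 0 and let (Δ_k)_{k≥0} be a sequence of positive reals satisfying Δ_k − Δ_{k+1} ≥ Δ_k^{ζ+1} for all k ≥ 0. Then for all k ≥ 1: Δ_k ≤ Δ_0 / (ζ·Δ_0^{ζ}·k + 1)^{1/ζ}, and in particular Δ_k ≤ (1/(ζ k))^{1/ζ}. -/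
open Real

/-- Bernoulli-type inequality: for `0 < s < 1` and `ζ > 0`, `(1 + ζ s) (1-s)^ζ ≤ 1`. -/
lemma aux_bernoulli (ζ s : ℝ) (hζ : 0 < ζ) (hs : 0 < s) (hs1 : s < 1) :
    (1 + ζ * s) * (1 - s) ^ ζ ≤ 1 := by
  have h1 : (0:ℝ) < 1 - s := by linarith
  have h2 : (1 - s) ^ ζ = Real.exp (ζ * Real.log (1 - s)) := by
    rw [← Real.exp_log h1, ← Real.exp_mul, Real.exp_log h1, mul_comm]
  have hlog : Real.log (1 - s) ≤ -s := by
    have := Real.log_le_sub_one_of_pos h1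
    linarith
  have h3 : (1 - s) ^ ζ ≤ Real.exp (-(ζ * s)) := by
    rw [h2]
    apply Real.exp_le_exp.mpr
    nlinarith
  have h4 : 1 + ζ * s ≤ Real.exp (ζ * s) := by
    have := Real.add_one_le_exp (ζ * s)
    linarith
  calc (1 + ζ * s) * (1 - s) ^ ζ ≤ Real.exp (ζ * s) * Real.exp (-(ζ * s)) := by
        apply mul_le_mul h4 h3 (Real.rpow_nonneg h1.le ζ) (Real.exp_pos _).le
    _ = 1 := by rw [← Real.exp_add]; simp

/-- Key step: `b⁻ζ ≥ a⁻ζ + ζ`. -/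
lemma aux_step (ζ a b : ℝ) (hζ : 0 < ζ) (ha : 0 < a) (hb : 0 < b)
    (h : a ^ (ζ + 1) ≤ a - b) : a ^ (-ζ) + ζ ≤ b ^ (-ζ) := by
  set s := a ^ ζ with hsdef
  have hs : 0 < s := Real.rpow_pos_of_pos ha ζ
  have haz1 : a ^ (ζ + 1) = s * a := by
    rw [hsdef, Real.rpow_add ha, Real.rpow_one]
  have hba : b < a := by nlinarith [Real.rpow_pos_of_pos ha (ζ + 1)]
  have hs1 : s < 1 := by
    have : s * a < a := by nlinarith
    exact (mul_lt_iff_lt_one_left ha).mp this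
  have hble : b ≤ a * (1 - s) := by nlinarith
  have h1s : (0:ℝ) < 1 - s := by linarith
  -- b^(-ζ) ≥ (a(1-s))^(-ζ) = a^(-ζ) (1-s)^(-ζ) ≥ a^(-ζ)(1+ζs)
  have hmono : (a * (1 - s)) ^ (-ζ) ≤ b ^ (-ζ) :=
    Real.rpow_le_rpow_of_nonpos hb hble (by linarith)
  have hsplit : (a * (1 - s)) ^ (-ζ) = a ^ (-ζ) * (1 - s) ^ (-ζ) :=
    Real.mul_rpow ha.le h1s.le
  have hbern : 1 + ζ * s ≤ (1 - s) ^ (-ζ) := by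
    have hprod := aux_bernoulli ζ s hζ hs hs1
    have hpow : (0:ℝ) < (1 - s) ^ ζ := Real.rpow_pos_of_pos h1s ζ
    rw [Real.rpow_neg h1s.le]
    rw [le_inv_comm₀ (by positivity) hpow]
    calc (1 - s) ^ ζ ≤ (1 - s) ^ ζ * (1 + ζ * s) / (1 + ζ * s) := by
          rw [mul_div_assoc, div_self (by positivity), mul_one]
      _ ≤ 1 / (1 + ζ * s) := by
          apply div_le_div_of_nonneg_right ?_ (by positivity) |>.trans_eq rfl
          nlinarith
      _ = (1 + ζ * s)⁻¹ := one_div _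
  have hinv : a ^ (-ζ) * s = 1 := by
    rw [hsdef, ← Real.rpow_add ha]; simp
  have hane : (0:ℝ) < a ^ (-ζ) := Real.rpow_pos_of_pos ha _
  calc a ^ (-ζ) + ζ = a ^ (-ζ) * (1 + ζ * s) := by
        rw [mul_add, mul_one]; ring_nf; nlinarith [hinv]
    _ ≤ a ^ (-ζ) * (1 - s) ^ (-ζ) := by
        apply mul_le_mul_of_nonneg_left hbern hane.le
    _ = (a * (1 - s)) ^ (-ζ) := hsplit.symm
    _ ≤ b ^ (-ζ) := hmono

theorem stmt_6 (ζ : ℝ) (hζ : 0 < ζ) (Δ : ℕ → ℝ) (hpos : ∀ k, 0 < Δ k)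
    (hrec : ∀ k : ℕ, Δ k ^ (ζ + 1) ≤ Δ k - Δ (k + 1)) :
    ∀ k : ℕ, 1 ≤ k →
      Δ k ≤ Δ 0 / (ζ * Δ 0 ^ ζ * (k : ℝ) + 1) ^ (1 / ζ) ∧
      Δ k ≤ (1 / (ζ * (k : ℝ))) ^ (1 / ζ) := by
  have hu : ∀ k : ℕ, Δ 0 ^ (-ζ) + ζ * k ≤ Δ k ^ (-ζ) := by
    intro k
    induction k with
    | zero => simp
    | succ n ih =>
      have := aux_step ζ (Δ n) (Δ (n + 1)) hζ (hpos n) (hpos (n + 1)) (hrec n)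
      push_cast
      linarith
  intro k hk
  have hkpos : (0:ℝ) < k := by exact_mod_cast hk
  have hΔ0 : 0 < Δ 0 := hpos 0
  have hΔk : 0 < Δ k := hpos k
  have hukey := hu k
  have hkey : ∀ c : ℝ, 0 < c → c ≤ Δ k ^ (-ζ) → Δ k ≤ c ^ (-(1/ζ)) := by
    intro c hc hle
    have := Real.rpow_le_rpow_of_nonpos hc hle (neg_nonpos.mpr (by positivity) : -(1/ζ) ≤ 0)
    calc Δ k = (Δ k ^ (-ζ)) ^ (-(1/ζ)) := by
          rw [← Real.rpow_mul hΔk.le]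
          rw [show -ζ * -(1/ζ) = 1 by field_simp]
          exact (Real.rpow_one _).symm
      _ ≤ c ^ (-(1/ζ)) := this
  constructor
  · have hc : (0:ℝ) < Δ 0 ^ (-ζ) * (ζ * Δ 0 ^ ζ * k + 1) := by
      have : (0:ℝ) < ζ * Δ 0 ^ ζ * k + 1 := by positivity
      positivity
    have hle : Δ 0 ^ (-ζ) * (ζ * Δ 0 ^ ζ * k + 1) ≤ Δ k ^ (-ζ) := by
      have hinv : Δ 0 ^ (-ζ) * Δ 0 ^ ζ = 1 := by
        rw [← Real.rpow_add hΔ0]; simp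
      have hne : (0:ℝ) < Δ 0 ^ (-ζ) := Real.rpow_pos_of_pos hΔ0 _
      nlinarith
    have := hkey _ hc hle
    refine this.trans_eq ?_
    rw [Real.mul_rpow (Real.rpow_pos_of_pos hΔ0 _).le (by positivity)]
    rw [← Real.rpow_mul hΔ0.le, show -ζ * -(1/ζ) = 1 by field_simp, Real.rpow_one]
    rw [Real.rpow_neg (by positivity)]
    exact (div_eq_mul_inv _ _).symm
  · have hc : (0:ℝ) < ζ * k := by positivity
    have hle : ζ * k ≤ Δ k ^ (-ζ) := by
      have : (0:ℝ) < Δ 0 ^ (-ζ) := Real.rpow_pos_of_pos hΔ0 _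
      linarith
    have := hkey _ hc hle
    refine this.trans_eq ?_
    rw [Real.rpow_neg hc.le, ← Real.inv_rpow hc.le, one_div (ζ * (k:ℝ))]
end

section
/- Let f, ψ : ℝⁿ → ℝ with f differentiable satisfying |f(x+Ud) − f(x) − ⟨Uᵀ∇f(x), d⟩| ≤ (L_U/2)‖d‖² for all d (descent-type bound along U ∈ ℝ^{n×p}), and let ψ be such that d ↦ ψ(x + Ud) is convex. Let H > L_U/2 and let d* minimize d ↦ f(x) + ⟨Uᵀ∇f(x), d⟩ + (H/2)‖d‖² + ψ(x + Ud) over ℝᵖ. Then F(x + Ud*) ≤ F(x) − (H − L_U/2)‖d*‖², where F = f + ψ. -/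
open Matrix

noncomputable def sketch {n p : ℕ} (U : Matrix (Fin n) (Fin p) ℝ) :
    EuclideanSpace ℝ (Fin p) →L[ℝ] EuclideanSpace ℝ (Fin n) :=
  LinearMap.toContinuousLinearMap (Matrix.toEuclideanLin U)

/-!
The model `m d = f x + ⟪Uᵀ∇f(x), d⟫ + (H/2)‖d‖² + ψ(x + Ud)` is `H`-strongly convex, so its value
`m 0 = F x` exceeds its minimum `m d*` by at least `(H/2)‖d*‖²`. The upper half of the descent
bound gives `F(x + Ud*) ≤ m d* - ((H - L)/2)‖d*‖²`; adding the two inequalities gives the claim.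
-/

open Filter Set Topology

lemma nonpos_of_forall_le_mul {a c : ℝ} (h : ∀ t : ℝ, 0 < t → t < 1 → a ≤ c * t) : a ≤ 0 := by
  have hlim : Tendsto (fun t : ℝ => c * t) (𝓝[>] 0) (𝓝 0) := by
    simpa using ((continuous_const_mul c).tendsto 0).mono_left nhdsWithin_le_nhds
  refine ge_of_tendsto hlim ?_
  filter_upwards [Ioo_mem_nhdsGT (zero_lt_one' ℝ)] with t ht using h t ht.1 ht.2

section StrongConvexity

variable {E : Type*} [NormedAddCommGroup E] [InnerProductSpace ℝ E]

open RealInnerProductSpace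

lemma ConvexOn.add_sq_norm_le_of_isMinOn {φ : E → ℝ} {H : ℝ} {d : E}
    (hφ : ConvexOn ℝ univ φ) (hmin : IsMinOn (fun y => φ y + H / 2 * ‖y‖ ^ 2) univ d) (y : E) :
    φ d + H / 2 * ‖d‖ ^ 2 + H / 2 * ‖y - d‖ ^ 2 ≤ φ y + H / 2 * ‖y‖ ^ 2 := by
  set v := y - d
  have hsq : ∀ t : ℝ, ‖d + t • v‖ ^ 2 = ‖d‖ ^ 2 + 2 * t * ⟪d, v⟫ + t ^ 2 * ‖v‖ ^ 2 := by
    intro t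
    rw [norm_add_sq_real, inner_smul_right, norm_smul, mul_pow, Real.norm_eq_abs, sq_abs]
    ring
  -- first-order optimality along the segment from `d` to `y`
  have hvar : φ d - φ y - H * ⟪d, v⟫ ≤ 0 := by
    refine nonpos_of_forall_le_mul (c := H / 2 * ‖v‖ ^ 2) fun t ht0 ht1 => ?_
    have hle := isMinOn_univ_iff.mp hmin (d + t • v)
    have hconv : φ (d + t • v) ≤ (1 - t) * φ d + t * φ y := by
      have hpt : d + t • v = (1 - t) • d + t • y := by
        simp only [v, smul_sub, sub_smul, one_smul]
        abel
      rw [hpt]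
      exact hφ.2 (mem_univ d) (mem_univ y) (by linarith) ht0.le (by ring)
    simp only [hsq] at hle
    have hscaled : t * (φ d - φ y - H * ⟪d, v⟫) ≤ t * (H / 2 * ‖v‖ ^ 2 * t) := by nlinarith
    exact le_of_mul_le_mul_left hscaled ht0
  have hnorm_y : ‖y‖ ^ 2 = ‖d‖ ^ 2 + 2 * ⟪d, v⟫ + ‖v‖ ^ 2 := by
    simpa [v] using hsq 1
  rw [hnorm_y]
  linarith

end StrongConvexity

theorem stmt_12_general {n p : ℕ} (f ψ : EuclideanSpace ℝ (Fin n) → ℝ)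
    (U : Matrix (Fin n) (Fin p) ℝ) (x : EuclideanSpace ℝ (Fin n)) (L H : ℝ)
    (hquad : ∀ d : EuclideanSpace ℝ (Fin p),
      |f (x + sketch U d) - f x - inner ℝ (sketch Uᵀ (gradient f x)) d| ≤ L / 2 * ‖d‖ ^ 2)
    (hψconv : ConvexOn ℝ Set.univ (fun d : EuclideanSpace ℝ (Fin p) => ψ (x + sketch U d)))
    (dstar : EuclideanSpace ℝ (Fin p))
    (hmin : ∀ d : EuclideanSpace ℝ (Fin p),
      f x + inner ℝ (sketch Uᵀ (gradient f x)) dstar + H / 2 * ‖dstar‖ ^ 2 + ψ (x + sketch U dstar)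
        ≤ f x + inner ℝ (sketch Uᵀ (gradient f x)) d + H / 2 * ‖d‖ ^ 2 + ψ (x + sketch U d)) :
    f (x + sketch U dstar) + ψ (x + sketch U dstar)
      ≤ f x + ψ x - (H - L / 2) * ‖dstar‖ ^ 2 := by
  set g := sketch Uᵀ (gradient f x)
  have hconv : ConvexOn ℝ univ (fun d => inner ℝ g d + ψ (x + sketch U d)) :=
    ((innerₛₗ ℝ g).convexOn convex_univ).add hψconv
  have hgrowth := hconv.add_sq_norm_le_of_isMinOn (H := H) (d := dstar)
    (isMinOn_univ_iff.mpr fun d => by linarith [hmin d]) 0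
  simp only [inner_zero_right, map_zero, add_zero, zero_sub, norm_neg, norm_zero] at hgrowth
  have hdescent := (abs_le.mp (hquad dstar)).2
  linarith

theorem stmt_12 {n p : ℕ} (f ψ : EuclideanSpace ℝ (Fin n) → ℝ) (hf : Differentiable ℝ f)
    (U : Matrix (Fin n) (Fin p) ℝ) (x : EuclideanSpace ℝ (Fin n)) (L H : ℝ)
    (hquad : ∀ d : EuclideanSpace ℝ (Fin p),
      |f (x + sketch U d) - f x - inner ℝ (sketch Uᵀ (gradient f x)) d| ≤ L / 2 * ‖d‖ ^ 2)
    (hψconv : ConvexOn ℝ Set.univ (fun d : EuclideanSpace ℝ (Fin p) => ψ (x + sketch U d)))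
    (hH : L / 2 < H) (dstar : EuclideanSpace ℝ (Fin p))
    (hmin : ∀ d : EuclideanSpace ℝ (Fin p),
      f x + inner ℝ (sketch Uᵀ (gradient f x)) dstar + H / 2 * ‖dstar‖ ^ 2 + ψ (x + sketch U dstar)
        ≤ f x + inner ℝ (sketch Uᵀ (gradient f x)) d + H / 2 * ‖d‖ ^ 2 + ψ (x + sketch U d)) :
    f (x + sketch U dstar) + ψ (x + sketch U dstar)
      ≤ f x + ψ x - (H - L / 2) * ‖dstar‖ ^ 2 :=
  stmt_12_general f ψ U x L H hquad hψconv dstar hmin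
end

section
/- Let f, ψ : ℝⁿ → ℝ with f differentiable satisfying |f(x+Ud) − f(x) − ⟨Uᵀ∇f(x), d⟩| ≤ (L_U/2)‖d‖² for all d ∈ ℝᵖ (no convexity assumed on ψ). Let H > L_U and let d* be any global minimizer of d ↦ f(x) + ⟨Uᵀ∇f(x), d⟩ + (H/2)‖d‖² + ψ(x + Ud). Then F(x + Ud*) ≤ F(x) − ((H − L_U)/2)‖d*‖², where F = f + ψ. -/
open Matrix

/- The model beats its value `f x + ψ x` at `0`; bounding its linear part from below by the upper
bound on `f (x + A d)` leaves the gap `(H - L) / 2 * ‖d‖ ^ 2`. -/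
theorem add_le_sub_of_le_model_zero {V E : Type*} [NormedAddCommGroup V] [InnerProductSpace ℝ V]
    [NormedAddCommGroup E] [NormedSpace ℝ E] (A : V →L[ℝ] E) (f ψ : E → ℝ) (x : E) (g : V)
    (L H : ℝ) (d : V)
    (hupper : f (x + A d) - f x - inner ℝ g d ≤ L / 2 * ‖d‖ ^ 2)
    (hmin : f x + inner ℝ g d + H / 2 * ‖d‖ ^ 2 + ψ (x + A d)
      ≤ f x + inner ℝ g 0 + H / 2 * ‖(0 : V)‖ ^ 2 + ψ (x + A 0)) :
    f (x + A d) + ψ (x + A d) ≤ f x + ψ x - (H - L) / 2 * ‖d‖ ^ 2 := by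
  simp only [map_zero, inner_zero_right, norm_zero, add_zero] at hmin
  linarith

theorem stmt_13_general {n p : ℕ} (f ψ : EuclideanSpace ℝ (Fin n) → ℝ)
    (U : Matrix (Fin n) (Fin p) ℝ) (x : EuclideanSpace ℝ (Fin n)) (L H : ℝ)
    (hquad : ∀ d : EuclideanSpace ℝ (Fin p),
      |f (x + sketch U d) - f x - inner ℝ (sketch Uᵀ (gradient f x)) d| ≤ L / 2 * ‖d‖ ^ 2)
    (dstar : EuclideanSpace ℝ (Fin p))
    (hmin : ∀ d : EuclideanSpace ℝ (Fin p),
      f x + inner ℝ (sketch Uᵀ (gradient f x)) dstar + H / 2 * ‖dstar‖ ^ 2 + ψ (x + sketch U dstar)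
        ≤ f x + inner ℝ (sketch Uᵀ (gradient f x)) d + H / 2 * ‖d‖ ^ 2 + ψ (x + sketch U d)) :
    f (x + sketch U dstar) + ψ (x + sketch U dstar)
      ≤ f x + ψ x - (H - L) / 2 * ‖dstar‖ ^ 2 :=
  add_le_sub_of_le_model_zero (sketch U) f ψ x _ L H dstar (abs_le.mp (hquad dstar)).2 (hmin 0)

theorem stmt_13 {n p : ℕ} (f ψ : EuclideanSpace ℝ (Fin n) → ℝ) (hf : Differentiable ℝ f)
    (U : Matrix (Fin n) (Fin p) ℝ) (x : EuclideanSpace ℝ (Fin n)) (L H : ℝ)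
    (hquad : ∀ d : EuclideanSpace ℝ (Fin p),
      |f (x + sketch U d) - f x - inner ℝ (sketch Uᵀ (gradient f x)) d| ≤ L / 2 * ‖d‖ ^ 2)
    (hH : L < H) (dstar : EuclideanSpace ℝ (Fin p))
    (hmin : ∀ d : EuclideanSpace ℝ (Fin p),
      f x + inner ℝ (sketch Uᵀ (gradient f x)) dstar + H / 2 * ‖dstar‖ ^ 2 + ψ (x + sketch U dstar)
        ≤ f x + inner ℝ (sketch Uᵀ (gradient f x)) d + H / 2 * ‖d‖ ^ 2 + ψ (x + sketch U d)) :
    f (x + sketch U dstar) + ψ (x + sketch U dstar)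
      ≤ f x + ψ x - (H - L) / 2 * ‖dstar‖ ^ 2 :=
  stmt_13_general f ψ U x L H hquad dstar hmin
end

section
/- Let f, ψ : ℝⁿ → ℝ be differentiable, U ∈ ℝ^{n×p}, H > 0, and suppose d* satisfies the first-order optimality condition Uᵀ(∇f(x) + ∇ψ(x + Ud*)) + H·d* = 0. Suppose additionally that ‖Uᵀ(∇ψ(x + Ud*) − ∇ψ(x))‖ ≤ H_ψ ‖d*‖ for some H_ψ ≥ 0, and that ‖Uᵀ∇F(x)‖² ≥ α‖∇F(x)‖² for some α > 0, where F = f + ψ. Then ‖∇F(x)‖² ≤ (2(H_ψ² + H²)/α)·‖d*‖². -/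
open Matrix

theorem stmt_14 {n p : ℕ} (f ψ : EuclideanSpace ℝ (Fin n) → ℝ)
    (hf : Differentiable ℝ f) (hψ : Differentiable ℝ ψ)
    (U : Matrix (Fin n) (Fin p) ℝ) (x : EuclideanSpace ℝ (Fin n))
    (dstar : EuclideanSpace ℝ (Fin p)) (H Hψ α : ℝ) (hH : 0 < H) (hHψ : 0 ≤ Hψ) (hα : 0 < α)
    (hopt : sketch Uᵀ (gradient f x + gradient ψ (x + sketch U dstar)) + H • dstar = 0)
    (hlip : ‖sketch Uᵀ (gradient ψ (x + sketch U dstar) - gradient ψ x)‖ ≤ Hψ * ‖dstar‖)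
    (halign : α * ‖gradient (fun y => f y + ψ y) x‖ ^ 2
        ≤ ‖sketch Uᵀ (gradient (fun y => f y + ψ y) x)‖ ^ 2) :
    ‖gradient (fun y => f y + ψ y) x‖ ^ 2 ≤ 2 * (Hψ ^ 2 + H ^ 2) / α * ‖dstar‖ ^ 2 := by
  have hgrad : gradient (fun y => f y + ψ y) x = gradient f x + gradient ψ x := by
    have h1 : HasGradientAt f (gradient f x) x := (hf x).hasGradientAt
    have h2 : HasGradientAt ψ (gradient ψ x) x := (hψ x).hasGradientAt
    have : HasGradientAt (fun y => f y + ψ y) (gradient f x + gradient ψ x) x := by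
      rw [hasGradientAt_iff_hasFDerivAt] at h1 h2 ⊢
      rw [map_add]
      exact h1.add h2
    exact this.gradient
  -- key norm bound
  have key : ‖sketch Uᵀ (gradient (fun y => f y + ψ y) x)‖ ≤ (Hψ + H) * ‖dstar‖ := by
    rw [hgrad]
    have heq : sketch Uᵀ (gradient f x + gradient ψ x)
        = (sketch Uᵀ (gradient f x + gradient ψ (x + sketch U dstar)) + H • dstar)
          - sketch Uᵀ (gradient ψ (x + sketch U dstar) - gradient ψ x) - H • dstar := by
      simp [map_add, map_sub]
      abel
    rw [heq, hopt]
    calc ‖0 - sketch Uᵀ (gradient ψ (x + sketch U dstar) - gradient ψ x) - H • dstar‖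
        ≤ ‖0 - sketch Uᵀ (gradient ψ (x + sketch U dstar) - gradient ψ x)‖ + ‖H • dstar‖ :=
          norm_sub_le _ _
      _ ≤ Hψ * ‖dstar‖ + H * ‖dstar‖ := by
          rw [zero_sub, norm_neg, norm_smul, Real.norm_eq_abs, abs_of_pos hH]
          exact add_le_add hlip le_rfl
      _ = (Hψ + H) * ‖dstar‖ := by ring
  have h2 : ‖sketch Uᵀ (gradient (fun y => f y + ψ y) x)‖ ^ 2 ≤ ((Hψ + H) * ‖dstar‖) ^ 2 := by
    apply pow_le_pow_left₀ (norm_nonneg _) key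
  have h3 : α * ‖gradient (fun y => f y + ψ y) x‖ ^ 2 ≤ 2 * (Hψ ^ 2 + H ^ 2) * ‖dstar‖ ^ 2 := by
    refine halign.trans (h2.trans ?_)
    have : (Hψ + H) ^ 2 ≤ 2 * (Hψ ^ 2 + H ^ 2) := by nlinarith [sq_nonneg (Hψ - H)]
    nlinarith [sq_nonneg ‖dstar‖]
  rw [div_mul_eq_mul_div, le_div_iff₀ hα, mul_comm _ α]
  linarith [h3]
end

section
/- Let T be a {0,1}-valued random variable with P[T = 1] = p ∈ [0,1]. Then for all t ≥ 0, E[e^{−t(T − p)}] ≤ e^{t² p / 2}. -/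
/-!
The expectation equals `e^{tp} (1 - p + p e^{-t}) ≤ exp (tp + p (e^{-t} - 1))` by `1 + x ≤ eˣ`,
and `e^{-t} ≤ 1 - t + t²/2` for `t ≥ 0` bounds the exponent by `t²p/2`.
-/

open MeasureTheory

theorem Real.exp_neg_le_one_sub_add_sq_div_two {t : ℝ} (ht : 0 ≤ t) :
    Real.exp (-t) ≤ 1 - t + t ^ 2 / 2 := by
  let f : ℝ → ℝ := fun x ↦ 1 - x + x ^ 2 / 2 - Real.exp (-x)
  have hf_deriv (x : ℝ) : HasDerivAt f (-1 + x + Real.exp (-x)) x := by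
    refine ((((hasDerivAt_id x).const_sub 1).add ((hasDerivAt_pow 2 x).div_const 2)).sub
      (hasDerivAt_neg x).exp).congr_deriv ?_
    simp only [Nat.cast_ofNat]; ring
  have hf_mono : Monotone f := by
    refine monotone_of_deriv_nonneg (fun x ↦ (hf_deriv x).differentiableAt) fun x ↦ ?_
    rw [(hf_deriv x).deriv]
    linarith [Real.add_one_le_exp (-x)]
  have h := hf_mono ht
  simp only [f, neg_zero, Real.exp_zero] at h
  linarith

theorem integral_comp_of_forall_eq_zero_or_one {Ω : Type*} {m : MeasurableSpace Ω}
    (μ : Measure Ω) [IsProbabilityMeasure μ] {T : Ω → ℝ} (hT : Measurable T)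
    (hT01 : ∀ ω, T ω = 0 ∨ T ω = 1) (g : ℝ → ℝ) :
    ∫ ω, g (T ω) ∂μ = μ.real {ω | T ω = 1} * g 1 + (1 - μ.real {ω | T ω = 1}) * g 0 := by
  set A := {ω | T ω = 1}
  have hA : MeasurableSet A := hT (measurableSet_singleton 1)
  have h_split : (fun ω ↦ g (T ω)) =
      fun ω ↦ A.indicator (fun _ ↦ g 1) ω + Aᶜ.indicator (fun _ ↦ g 0) ω := by
    funext ω
    rcases hT01 ω with h | h <;> simp [A, h]
  rw [h_split, integral_add ((integrable_const _).indicator hA)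
    ((integrable_const _).indicator hA.compl), integral_indicator_const _ hA,
    integral_indicator_const _ hA.compl, probReal_compl_eq_one_sub hA, smul_eq_mul, smul_eq_mul]

theorem centered_bernoulli_mgf_le {p : ℝ} (hp : 0 ≤ p) {t : ℝ} (ht : 0 ≤ t) :
    p * Real.exp (-t * (1 - p)) + (1 - p) * Real.exp (-t * (0 - p)) ≤ Real.exp (t ^ 2 * p / 2) :=
  calc p * Real.exp (-t * (1 - p)) + (1 - p) * Real.exp (-t * (0 - p))
      = Real.exp (t * p) * (1 + p * (Real.exp (-t) - 1)) := by
        rw [show -t * (1 - p) = t * p + -t by ring, Real.exp_add]; ring_nf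
    _ ≤ Real.exp (t * p) * Real.exp (p * (Real.exp (-t) - 1)) := by
        gcongr; linarith [Real.add_one_le_exp (p * (Real.exp (-t) - 1))]
    _ ≤ Real.exp (t ^ 2 * p / 2) := by
        rw [← Real.exp_add, Real.exp_le_exp]
        nlinarith [Real.exp_neg_le_one_sub_add_sq_div_two ht]

theorem stmt_17_general {Ω : Type*} {m : MeasurableSpace Ω} (μ : Measure Ω) [IsProbabilityMeasure μ]
    (T : Ω → ℝ) (hTmeas : Measurable T) (hT01 : ∀ ω, T ω = 0 ∨ T ω = 1)
    (p : ℝ) (hp0 : 0 ≤ p) (hTp : μ {ω | T ω = 1} = ENNReal.ofReal p)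
    (t : ℝ) (ht : 0 ≤ t) :
    ∫ ω, Real.exp (-t * (T ω - p)) ∂μ ≤ Real.exp (t ^ 2 * p / 2) := by
  have hμ : μ.real {ω | T ω = 1} = p := by rw [measureReal_def, hTp, ENNReal.toReal_ofReal hp0]
  rw [integral_comp_of_forall_eq_zero_or_one μ hTmeas hT01 (fun x ↦ Real.exp (-t * (x - p))), hμ]
  exact centered_bernoulli_mgf_le hp0 ht

theorem stmt_17 {Ω : Type*} {m : MeasurableSpace Ω} (μ : Measure Ω) [IsProbabilityMeasure μ]
    (T : Ω → ℝ) (hTmeas : Measurable T) (hT01 : ∀ ω, T ω = 0 ∨ T ω = 1)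
    (p : ℝ) (hp0 : 0 ≤ p) (hp1 : p ≤ 1) (hTp : μ {ω | T ω = 1} = ENNReal.ofReal p)
    (t : ℝ) (ht : 0 ≤ t) :
    ∫ ω, Real.exp (-t * (T ω - p)) ∂μ ≤ Real.exp (t ^ 2 * p / 2) :=
  stmt_17_general (m := m) μ T hTmeas hT01 p hp0 hTp t ht
end
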